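/- arXiv:1202.6033 — 2 statements merged into one kernel-verified Lean document; each statement's English description precedes it below -/
import Mathlib

section
/- Let X_1, ..., X_n be independent Bernoulli random variables where X_i has success probability p_i ∈ [0,1]. Let T be the random variable equal to the smallest index i such that X_i = 1 (and T = n if all X_i = 0). Then the expectation of the sum p_1 + p_2 + ... + p_T is at most 1. -/
/-!
`i ≤ T` holds exactly when the first `i` trials all fail, an event of probability
`∏_{j<i} (1 - p j)` by independence. Hence the expectation is
`∑ i, p i ∏_{j<i} (1 - p j) = 1 - ∏ i, (1 - p i)`, and the last product is the probability
that every trial fails, so it is nonnegative.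
-/

open MeasureTheory ProbabilityTheory Finset

lemma le_sInf_firstTrue_iff {n : ℕ} (b : Fin n → Bool) (i : Fin n) :
    (i : ℕ) ≤ sInf ({k : ℕ | ∃ h : k < n, b ⟨k, h⟩ = true} ∪ {n - 1}) ↔
      ∀ j < i, b j = false := by
  rw [le_csInf_iff (OrderBot.bddBelow _) ⟨n - 1, Or.inr rfl⟩]
  constructor
  · intro h j hji
    by_contra hb
    exact absurd (h j (Or.inl ⟨j.isLt, by simpa using hb⟩)) (not_le.2 hji)
  · rintro h k (⟨hk, hb⟩ | rfl)
    · by_contra hki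
      simp [h ⟨k, hk⟩ (not_le.1 hki)] at hb
    · omega

lemma measureReal_forall_eq_false {Ω ι : Type*} [MeasurableSpace Ω] {μ : Measure Ω}
    [IsProbabilityMeasure μ] {X : ι → Ω → Bool} (hmeas : ∀ i, Measurable (X i))
    (hindep : iIndepFun X μ) (s : Finset ι) :
    μ.real {ω | ∀ j ∈ s, X j ω = false} = ∏ j ∈ s, (1 - μ.real {ω | X j ω = true}) := by
  have hevent : {ω | ∀ j ∈ s, X j ω = false} = ⋂ j ∈ s, X j ⁻¹' {false} := by
    ext; simp
  rw [hevent, measureReal_def, hindep.meas_biInter fun j _ => ⟨{false}, trivial, rfl⟩,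
    ENNReal.toReal_prod]
  refine prod_congr rfl fun j _ => ?_
  have hcompl : X j ⁻¹' {false} = {ω | X j ω = true}ᶜ := by
    ext; simp
  rw [hcompl, ← measureReal_def,
    measureReal_compl (s := {ω | X j ω = true}) (hmeas j (measurableSet_singleton true)),
    probReal_univ]

theorem stmt_0_general {Ω : Type*} [MeasurableSpace Ω] (μ : Measure Ω) [IsProbabilityMeasure μ]
    (n : ℕ) (X : Fin n → Ω → Bool) (p : Fin n → ℝ)
    (hmeas : ∀ i, Measurable (X i))
    (hindep : iIndepFun X μ)
    (hp : ∀ i, (μ {ω | X i ω = true}).toReal = p i)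
    (T : Ω → ℕ)
    (hT : ∀ ω, T ω = sInf ({i : ℕ | ∃ h : i < n, X ⟨i, h⟩ ω = true} ∪ {n - 1})) :
    ∫ ω, (∑ i : Fin n, if (i : ℕ) ≤ T ω then p i else 0) ∂μ ≤ 1 := by
  simp only [← measureReal_def] at hp
  set A : Fin n → Set Ω := fun i => {ω | ∀ j ∈ univ.filter (· < i), X j ω = false}
  have hA_meas (i : Fin n) : MeasurableSet (A i) := by
    simpa only [A, Set.ofPred_forall] using
      .iInter fun j => .iInter fun _ => hmeas j (measurableSet_singleton false)
  have hA_real (i : Fin n) : μ.real (A i) = ∏ j ∈ univ.filter (· < i), (1 - p j) := by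
    simp only [A, measureReal_forall_eq_false hmeas hindep, hp]
  have hintegrand (ω : Ω) : (∑ i : Fin n, if (i : ℕ) ≤ T ω then p i else 0) =
      ∑ i, (A i).indicator (fun _ => p i) ω := by
    refine sum_congr rfl fun i _ => ?_
    simp only [hT, le_sInf_firstTrue_iff (X · ω), Set.indicator_apply, A]
    simp
  calc ∫ ω, (∑ i : Fin n, if (i : ℕ) ≤ T ω then p i else 0) ∂μ
      = ∑ i, p i * ∏ j ∈ univ.filter (· < i), (1 - p j) := by
        simp_rw [hintegrand]
        rw [integral_finsetSum _ fun i _ => (integrable_const (p i)).indicator (hA_meas i)]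
        simp [integral_indicator_const _ (hA_meas _), hA_real, mul_comm]
    _ = 1 - ∏ i, (1 - p i) := by rw [prod_one_sub_ordered, sub_sub_cancel]
    _ ≤ 1 := by
        have hall_fail := measureReal_forall_eq_false hmeas hindep (μ := μ) univ
        simp only [hp] at hall_fail
        exact sub_le_self _ (hall_fail ▸ measureReal_nonneg)

/-- For independent Bernoulli random variables `X i` with success
probabilities `p i`, and `T` the first index with `X i = true` (or the last index `n-1`,
i.e. "T = n" in 1-indexed terms, if all fail), the expectation of `∑_{i ≤ T} p i` is at most 1. -/
theorem stmt_0 {Ω : Type*} [MeasurableSpace Ω] (μ : Measure Ω) [IsProbabilityMeasure μ]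
    (n : ℕ) (hn : 0 < n) (X : Fin n → Ω → Bool) (p : Fin n → ℝ)
    (hmeas : ∀ i, Measurable (X i))
    (hindep : iIndepFun X μ)
    (hp : ∀ i, (μ {ω | X i ω = true}).toReal = p i)
    (hp01 : ∀ i, 0 ≤ p i ∧ p i ≤ 1)
    (T : Ω → ℕ)
    (hT : ∀ ω, T ω = sInf ({i : ℕ | ∃ h : i < n, X ⟨i, h⟩ ω = true} ∪ {n - 1})) :
    ∫ ω, (∑ i : Fin n, if (i : ℕ) ≤ T ω then p i else 0) ∂μ ≤ 1 :=
  stmt_0_general μ n X p hmeas hindep hp T hT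
end

section
/- Let W_i for i ∈ [n] be defined by the Bollobás–Riordan construction: sample mn pairs (x_{i,j}, y_{i,j}) uniformly from the triangle {(x,y) : 0 ≤ x < y ≤ 1}, sort so the y_{i,j} are increasing, and set W_i = y_{i,m}. Then with probability 1 - o(1), |W_i - √(i/n)| ≤ (1/100)·√(i/n) simultaneously for all i with 160·log(n)·(log log n)² ≤ i ≤ n. -/
/-!
The `k`-th smallest of `N` samples is `≤ t` exactly when at least `k` samples are `≤ t`. Hence
`W_i < 0.99 √(i/n)` and `W_i > 1.01 √(i/n)` are tail events of binomial counts with means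
`0.99² m i` and `1.01² m i` around the rank `m i`, and Chernoff's bound makes each of them
exponentially unlikely in `i`. A union bound over `i ≥ L` leaves a geometric tail of order
`exp (-L / 20000)`, which vanishes since `L = 160 log n (log log n)² → ∞`.
-/

open MeasureTheory ProbabilityTheory
open Finset Real

theorem List.Pairwise.getD_le_iff_lt_countP {α : Type*} [LinearOrder α] {l : List α}
    (hl : l.Pairwise (· ≤ ·)) {k : ℕ} (hk : k < l.length) (d t : α) :
    l.getD k d ≤ t ↔ k < l.countP (· ≤ t) := by
  induction l generalizing k with
  | nil => simp at hk
  | cons a l ih =>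
    rw [List.pairwise_cons] at hl
    by_cases hat : a ≤ t
    · cases k with
      | zero => simp [hat]
      | succ k =>
        rw [List.getD_cons_succ, List.countP_cons_of_pos (by simpa using hat),
          ih hl.2 (by simpa using hk)]
        omega
    · have hmem : (a :: l).getD k d ∈ a :: l := by
        rw [List.getD_eq_getElem _ _ hk]; exact List.getElem_mem _
      have hge : ∀ b ∈ a :: l, a ≤ b := by simpa using hl.1
      have hcount : (a :: l).countP (· ≤ t) = 0 :=
        List.countP_eq_zero.2 fun b hb hbt => hat ((hge b hb).trans (by simpa using hbt))
      simp only [hcount, Nat.not_lt_zero, iff_false, not_le]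
      exact (lt_of_not_ge hat).trans_le (hge _ hmem)

theorem List.countP_ofFn {α : Type*} {N : ℕ} (x : Fin N → α) (p : α → Prop)
    [DecidablePred p] :
    (List.ofFn x).countP (fun a => decide (p a)) = #{j | p (x j)} := by
  rw [List.ofFn_eq_map, List.countP_map, Finset.card_def, Finset.filter_val,
    ← Multiset.countP_eq_card_filter]
  rfl

/-- The `k`-th smallest of `x 0, …, x (N-1)`, counted from `k = 1` (`k = 0` gives the minimum,
`k > N` gives `0`). -/
noncomputable def orderStat {N : ℕ} (x : Fin N → ℝ) (k : ℕ) : ℝ :=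
  ((List.ofFn x).mergeSort (fun a b => decide (a ≤ b))).getD (k - 1) 0

theorem orderStat_le_iff {N k : ℕ} (x : Fin N → ℝ) (hk : 0 < k) (hkN : k ≤ N) (t : ℝ) :
    orderStat x k ≤ t ↔ k ≤ #{j | x j ≤ t} := by
  have hperm := List.mergeSort_perm (List.ofFn x) (fun a b => decide (a ≤ b))
  rw [orderStat, (List.pairwise_mergeSort' (· ≤ ·) _).getD_le_iff_lt_countP
    (by rw [hperm.length_eq, List.length_ofFn]; omega), hperm.countP_eq, List.countP_ofFn]
  omega

section Chernoff

variable {Ω ι : Type*} [MeasurableSpace Ω] {μ : Measure Ω}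

theorem ProbabilityTheory.iIndepFun.iIndepSet_preimage {β : Type*} [MeasurableSpace β]
    {z : ι → Ω → β} (h : iIndepFun z μ) (hz : ∀ j, Measurable (z j)) {S : Set β}
    (hS : MeasurableSet S) : iIndepSet (fun j => z j ⁻¹' S) μ :=
  (iIndepSet_iff_meas_biInter fun j => hz j hS).2 fun s =>
    iIndepFun_iff_measure_inter_preimage_eq_mul.1 h s fun _ _ => hS

variable [IsProbabilityMeasure μ]

theorem mgf_indicator_one {A : Set Ω} (hA : MeasurableSet A) (s : ℝ) :
    mgf (A.indicator 1) μ s = 1 + μ.real A * (exp s - 1) := by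
  have hexp : (fun ω => exp (s * A.indicator 1 ω)) =
      fun ω => A.indicator (fun _ => exp s - 1) ω + 1 := by
    ext ω
    by_cases hω : ω ∈ A <;> simp [hω]
  rw [mgf, hexp, integral_add ((integrable_const _).indicator hA) (integrable_const 1),
    integral_indicator_const _ hA]
  simp only [smul_eq_mul, integral_const, probReal_univ]
  ring

variable [Fintype ι] {A : ι → Set Ω} {p : ℝ}

theorem mgf_sum_indicator_le_exp (hA : ∀ j, MeasurableSet (A j)) (hind : iIndepSet A μ)
    (hp : ∀ j, μ.real (A j) = p) (s : ℝ) :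
    mgf (∑ j, (A j).indicator 1) μ s ≤ exp (Fintype.card ι * p * (exp s - 1)) := by
  have hindep : iIndepFun (fun j => (A j).indicator (1 : Ω → ℝ)) μ := hind.iIndepFun_indicator
  rw [hindep.mgf_sum fun j => measurable_one.indicator (hA j)]
  calc ∏ j, mgf ((A j).indicator 1) μ s ≤ ∏ _j : ι, exp (p * (exp s - 1)) := by
        refine prod_le_prod (fun _ _ => mgf_nonneg) fun j _ => ?_
        rw [mgf_indicator_one (hA j), hp j]
        linarith [add_one_le_exp (p * (exp s - 1))]
    _ = exp (Fintype.card ι * p * (exp s - 1)) := by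
        rw [prod_const, card_univ, ← exp_nat_mul, mul_assoc]

theorem integrable_exp_mul_sum_indicator (hA : ∀ j, MeasurableSet (A j)) (s : ℝ) :
    Integrable (fun ω => exp (s * (∑ j, (A j).indicator 1) ω)) μ :=
  integrable_exp_mul_of_mem_Icc (a := 0) (b := Fintype.card ι)
    (Finset.aemeasurable_sum _ fun j _ => (measurable_one.indicator (hA j)).aemeasurable)
    (ae_of_all _ fun ω => by
      simp only [Finset.sum_apply, Set.mem_Icc]
      refine ⟨sum_nonneg fun j _ => Set.indicator_nonneg (fun _ _ => zero_le_one) _, ?_⟩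
      calc ∑ j, (A j).indicator 1 ω ≤ ∑ _j : ι, (1 : ℝ) :=
            sum_le_sum fun j _ => Set.indicator_le_self' (fun _ _ => zero_le_one) ω
        _ = Fintype.card ι := by simp)

theorem measureReal_sum_indicator_ge_le_exp (hA : ∀ j, MeasurableSet (A j))
    (hind : iIndepSet A μ) (hp : ∀ j, μ.real (A j) = p) {s : ℝ} (hs : 0 ≤ s) (a : ℝ) :
    μ.real {ω | a ≤ ∑ j, (A j).indicator 1 ω} ≤
      exp (-s * a + Fintype.card ι * p * (exp s - 1)) := by
  have hchernoff :=
    measure_ge_le_exp_mul_mgf a hs (integrable_exp_mul_sum_indicator (μ := μ) hA s)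
  simp only [Finset.sum_apply] at hchernoff
  rw [exp_add]
  exact hchernoff.trans
    (mul_le_mul_of_nonneg_left (mgf_sum_indicator_le_exp hA hind hp s) (exp_pos _).le)

theorem measureReal_sum_indicator_le_le_exp (hA : ∀ j, MeasurableSet (A j))
    (hind : iIndepSet A μ) (hp : ∀ j, μ.real (A j) = p) {s : ℝ} (hs : s ≤ 0) (a : ℝ) :
    μ.real {ω | ∑ j, (A j).indicator 1 ω ≤ a} ≤
      exp (-s * a + Fintype.card ι * p * (exp s - 1)) := by
  have hchernoff :=
    measure_le_le_exp_mul_mgf a hs (integrable_exp_mul_sum_indicator (μ := μ) hA s)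
  simp only [Finset.sum_apply] at hchernoff
  rw [exp_add]
  exact hchernoff.trans
    (mul_le_mul_of_nonneg_left (mgf_sum_indicator_le_exp hA hind hp s) (exp_pos _).le)

end Chernoff

theorem Real.exp_le_one_add_add_three_quarters_mul_sq {x : ℝ} (hx : |x| ≤ 1) :
    exp x ≤ 1 + x + 3 / 4 * x ^ 2 := by
  have h := (abs_le.1 (Real.exp_bound hx (n := 2) (by norm_num))).2
  norm_num [Finset.sum_range_succ, Nat.factorial, sq_abs] at h
  linarith

section OrderStatistics

variable {Ω : Type*} {N k : ℕ} {z : Fin N → Ω → ℝ} {t p : ℝ}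

theorem setOf_orderStat_le_eq (hk : 0 < k) (hkN : k ≤ N) :
    {ω | orderStat (z · ω) k ≤ t} =
      {ω | (k : ℝ) ≤ ∑ j, {ω | z j ω ≤ t}.indicator 1 ω} := by
  ext ω
  simp only [Set.mem_ofPred_eq, orderStat_le_iff _ hk hkN, Set.indicator_apply, Pi.one_apply,
    sum_boole, Nat.cast_le]

theorem setOf_lt_orderStat_eq (hk : 0 < k) (hkN : k ≤ N) :
    {ω | t < orderStat (z · ω) k} =
      {ω | ∑ j, {ω | z j ω ≤ t}.indicator 1 ω ≤ (k : ℝ) - 1} := by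
  ext ω
  simp only [Set.mem_ofPred_eq, ← not_le, orderStat_le_iff _ hk hkN, Set.indicator_apply,
    Pi.one_apply, sum_boole, le_sub_iff_add_le]
  norm_cast
  omega

variable [MeasurableSpace Ω] {μ : Measure Ω} [IsProbabilityMeasure μ]

theorem measureReal_orderStat_le_le_exp (hz : ∀ j, Measurable (z j)) (hind : iIndepFun z μ)
    (hp : ∀ j, μ.real {ω | z j ω ≤ t} = p) (hk : 0 < k) (hkN : k ≤ N)
    (hNp : N * p ≤ (99 / 100) ^ 2 * k) :
    μ.real {ω | orderStat (z · ω) k ≤ t} ≤ exp (-(k / 20000)) := by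
  have hchernoff := measureReal_sum_indicator_ge_le_exp (fun j => hz j measurableSet_Iic)
    (hind.iIndepSet_preimage hz measurableSet_Iic) hp (s := 1 / 50) (by norm_num) k
  rw [Fintype.card_fin] at hchernoff
  rw [setOf_orderStat_le_eq hk hkN]
  refine hchernoff.trans (exp_le_exp.2 ?_)
  have he := exp_le_one_add_add_three_quarters_mul_sq (x := 1 / 50) (by norm_num [abs_of_pos])
  have he' := add_one_le_exp (1 / 50 : ℝ)
  -- the exponent is at most `k (-1/50 + 0.99² · 0.0203) < -10⁻⁴ k`
  nlinarith [mul_le_mul_of_nonneg_right hNp (by linarith : (0 : ℝ) ≤ exp (1 / 50) - 1)]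

theorem measureReal_lt_orderStat_le_exp (hz : ∀ j, Measurable (z j)) (hind : iIndepFun z μ)
    (hp : ∀ j, μ.real {ω | z j ω ≤ t} = p) (hk : 0 < k) (hkN : k ≤ N)
    (hNp : (101 / 100) ^ 2 * k ≤ N * p) :
    μ.real {ω | t < orderStat (z · ω) k} ≤ exp (-(k / 20000)) := by
  have hchernoff := measureReal_sum_indicator_le_le_exp (fun j => hz j measurableSet_Iic)
    (hind.iIndepSet_preimage hz measurableSet_Iic) hp (s := -(1 / 50)) (by norm_num) (k - 1)
  rw [Fintype.card_fin] at hchernoff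
  rw [setOf_lt_orderStat_eq hk hkN]
  refine hchernoff.trans (exp_le_exp.2 ?_)
  have he := exp_le_one_add_add_three_quarters_mul_sq (x := -(1 / 50)) (by norm_num [abs_of_neg])
  -- the exponent is at most `k (1/50 - 1.01² · 0.0197) < -9 · 10⁻⁵ k`
  nlinarith [mul_le_mul_of_nonpos_right hNp (by linarith : exp (-(1 / 50)) - 1 ≤ (0 : ℝ))]

theorem measureReal_lt_orderStat_eq_zero (hz : ∀ j, Measurable (z j))
    (ht : ∀ j, μ.real {ω | z j ω ≤ t} = 1) (hk : 0 < k) (hkN : k ≤ N) :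
    μ.real {ω | t < orderStat (z · ω) k} = 0 := by
  have hsub : {ω | t < orderStat (z · ω) k} ⊆ ⋃ j, {ω | z j ω ≤ t}ᶜ := by
    intro ω hω
    by_contra hall
    simp only [Set.mem_iUnion, Set.mem_compl_iff, Set.mem_ofPred_eq, not_exists, not_not] at hall
    refine (not_le.2 hω) ((orderStat_le_iff _ hk hkN t).2 ?_)
    simpa [filter_true_of_mem fun j _ => hall j] using hkN
  refine measureReal_mono_null hsub (le_antisymm ?_ measureReal_nonneg)
  refine (measureReal_iUnion_fintype_le _).trans_eq (sum_eq_zero fun j _ => ?_)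
  have hmeas : MeasurableSet {ω | z j ω ≤ t} := hz j measurableSet_Iic
  rw [probReal_compl_eq_one_sub hmeas, ht j, sub_self]

end OrderStatistics

theorem MeasureTheory.one_sub_probReal_compl_le {Ω : Type*} [MeasurableSpace Ω] {μ : Measure Ω}
    [IsProbabilityMeasure μ] (s : Set Ω) : 1 - μ.real sᶜ ≤ μ.real s := by
  have h := measureReal_union_le (μ := μ) s sᶜ
  rw [Set.union_compl_self, probReal_univ] at h
  linarith

section BollobasRiordan

variable {Ω : Type*} [MeasurableSpace Ω] {μ : Measure Ω} [IsProbabilityMeasure μ] {m n : ℕ}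
  {z : Fin (m * n) → Ω → ℝ}

theorem measureReal_not_abs_orderStat_sub_sqrt_le (hm : 0 < m) (hz : ∀ j, Measurable (z j))
    (hind : iIndepFun z μ)
    (hcdf : ∀ j, ∀ t : ℝ, 0 ≤ t → t ≤ 1 → μ.real {ω | z j ω ≤ t} = t ^ 2)
    {i : ℕ} (hi : 0 < i) (hin : i ≤ n) :
    μ.real {ω | ¬ |orderStat (z · ω) (m * i) - √(i / n)| ≤ 1 / 100 * √(i / n)} ≤
      2 * exp (-(1 / 20000)) ^ i := by
  set s := √((i : ℝ) / n)
  have hn : (0 : ℝ) < n := by exact_mod_cast hi.trans_le hin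
  have hs0 : 0 ≤ s := sqrt_nonneg _
  have hs1 : s ≤ 1 := sqrt_le_one.2 ((div_le_one hn).2 (by exact_mod_cast hin))
  have hk : 0 < m * i := Nat.mul_pos hm hi
  have hkN : m * i ≤ m * n := Nat.mul_le_mul_left m hin
  have hNp (c : ℝ) : ((m * n : ℕ) : ℝ) * (c * s) ^ 2 = c ^ 2 * (m * i : ℕ) := by
    rw [mul_pow, sq_sqrt (by positivity)]
    push_cast
    field_simp
  have hexp : exp (-((m * i : ℕ) / 20000)) ≤ exp (-(1 / 20000)) ^ i := by
    have hm1 : (1 : ℝ) ≤ m := by exact_mod_cast hm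
    rw [← exp_nat_mul, exp_le_exp]
    push_cast
    nlinarith [i.cast_nonneg (α := ℝ)]
  have hlow : μ.real {ω | orderStat (z · ω) (m * i) ≤ 99 / 100 * s} ≤
      exp (-(1 / 20000)) ^ i :=
    (measureReal_orderStat_le_le_exp hz hind (fun j => hcdf j _ (by positivity) (by linarith))
      hk hkN (hNp _).le).trans hexp
  have hhigh : μ.real {ω | 101 / 100 * s < orderStat (z · ω) (m * i)} ≤
      exp (-(1 / 20000)) ^ i := by
    rcases le_or_gt (101 / 100 * s) 1 with hs | hs
    · exact (measureReal_lt_orderStat_le_exp hz hind (fun j => hcdf j _ (by positivity) hs)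
        hk hkN (hNp _).ge).trans hexp
    -- beyond `t = 1` the CDF hypothesis is silent, but every `z j ≤ 1` almost surely
    · calc _ ≤ μ.real {ω | 1 < orderStat (z · ω) (m * i)} :=
            measureReal_mono fun ω hω => hs.trans hω
        _ = 0 := measureReal_lt_orderStat_eq_zero hz
            (fun j => by rw [hcdf j 1 zero_le_one le_rfl, one_pow]) hk hkN
        _ ≤ _ := by positivity
  have hsub : {ω | ¬ |orderStat (z · ω) (m * i) - s| ≤ 1 / 100 * s} ⊆
      {ω | orderStat (z · ω) (m * i) ≤ 99 / 100 * s} ∪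
        {ω | 101 / 100 * s < orderStat (z · ω) (m * i)} := by
    intro ω hω
    simp only [Set.mem_ofPred_eq, abs_le, not_and_or, not_le] at hω
    rcases hω with h | h
    · exact Or.inl (by simp only [Set.mem_ofPred_eq]; linarith)
    · exact Or.inr (by simp only [Set.mem_ofPred_eq]; linarith)
  calc _ ≤ _ := measureReal_mono hsub
    _ ≤ _ := measureReal_union_le _ _
    _ ≤ _ := by linarith

theorem one_sub_le_measureReal_forall_abs_orderStat_sub_sqrt_le (hm : 0 < m)
    (hz : ∀ j, Measurable (z j)) (hind : iIndepFun z μ)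
    (hcdf : ∀ j, ∀ t : ℝ, 0 ≤ t → t ≤ 1 → μ.real {ω | z j ω ≤ t} = t ^ 2)
    (L : ℝ) :
    1 - 2 * exp (-(1 / 20000)) ^ ⌈L⌉₊ / (1 - exp (-(1 / 20000))) ≤
      μ.real {ω | ∀ i ∈ Icc 1 n, L ≤ (i : ℝ) →
        |orderStat (z · ω) (m * i) - √(i / n)| ≤ 1 / 100 * √(i / n)} := by
  set r := exp (-(1 / 20000) : ℝ)
  set F := (Icc 1 n).filter fun i : ℕ => L ≤ i
  have hsub : {ω | ∀ i ∈ Icc 1 n, L ≤ (i : ℝ) →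
      |orderStat (z · ω) (m * i) - √(i / n)| ≤ 1 / 100 * √(i / n)}ᶜ ⊆
      ⋃ i ∈ F,
        {ω | ¬ |orderStat (z · ω) (m * i) - √(i / n)| ≤ 1 / 100 * √(i / n)} := by
    intro ω hω
    simp only [Set.mem_compl_iff, Set.mem_ofPred_eq, not_forall] at hω
    obtain ⟨i, hi, hiL, hfar⟩ := hω
    exact Set.mem_biUnion (mem_filter.2 ⟨hi, hiL⟩) hfar
  have hFsub : F ⊆ Ico ⌈L⌉₊ (n + 1) := fun i hi => by
    obtain ⟨hi, hiL⟩ := mem_filter.1 hi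
    exact mem_Ico.2 ⟨Nat.ceil_le.2 hiL, by have := (mem_Icc.1 hi).2; omega⟩
  refine le_trans (sub_le_sub_left ?_ 1) (one_sub_probReal_compl_le _)
  calc _ ≤ _ := measureReal_mono hsub (measure_ne_top _ _)
    _ ≤ _ := measureReal_biUnion_finset_le _ _
    _ ≤ ∑ i ∈ F, 2 * r ^ i := sum_le_sum fun i hi =>
        measureReal_not_abs_orderStat_sub_sqrt_le hm hz hind hcdf
          (mem_Icc.1 (mem_filter.1 hi).1).1 (mem_Icc.1 (mem_filter.1 hi).1).2
    _ ≤ ∑ i ∈ Ico ⌈L⌉₊ (n + 1), 2 * r ^ i :=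
        sum_le_sum_of_subset_of_nonneg hFsub fun i _ _ => by positivity
    _ ≤ 2 * r ^ ⌈L⌉₊ / (1 - r) := by
        rw [← mul_sum, mul_div_assoc]
        gcongr
        exact geom_sum_Ico_le_of_lt_one (exp_pos _).le (exp_lt_one_iff.2 (by norm_num))

end BollobasRiordan

open Filter Topology in
theorem tendsto_const_mul_log_mul_log_log_sq_atTop {c : ℝ} (hc : 0 < c) :
    Tendsto (fun x => c * log x * log (log x) ^ 2) atTop atTop := by
  refine tendsto_atTop_mono' _ ?_ ((tendsto_log_atTop.const_mul_atTop hc))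
  filter_upwards [tendsto_log_atTop.eventually_ge_atTop (exp 1)] with x hx
  have hx0 : 0 < log x := (exp_pos 1).trans_le hx
  have h1 : 1 ≤ log (log x) := by rwa [le_log_iff_exp_le hx0]
  have hlog : 0 ≤ c * log x := mul_nonneg hc.le hx0.le
  nlinarith [mul_le_mul_of_nonneg_left (one_le_pow₀ h1 : 1 ≤ log (log x) ^ 2) hlog]

open Filter Topology in
/-- Bollobás–Riordan concentration.  Let `z j` be `m·n` i.i.d. random
variables with CDF `t ↦ t²` on `[0,1]` (the `y`-coordinates of uniform points in the
triangle `{x < y}`), and let `W i` be the `(m·i)`-th order statistic.  Then with probability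
`1 - o(1)`, `|W i - √(i/n)| ≤ (1/100)√(i/n)` simultaneously for all
`160 log(n) (log log n)² ≤ i ≤ n`. -/
theorem stmt_11 (m : ℕ) (hm : 2 ≤ m) :
    ∀ ε > (0 : ℝ), ∃ N : ℕ, ∀ n : ℕ, N ≤ n →
    ∀ (Ω : Type) (_ : MeasurableSpace Ω) (μ : Measure Ω), IsProbabilityMeasure μ →
    ∀ z : Fin (m * n) → Ω → ℝ,
    (∀ j, Measurable (z j)) →
    iIndepFun z μ →
    (∀ j, ∀ t : ℝ, 0 ≤ t → t ≤ 1 → (μ {ω | z j ω ≤ t}).toReal = t ^ 2) →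
    1 - ε ≤ (μ {ω | ∀ i ∈ Finset.Icc 1 n,
        160 * Real.log n * (Real.log (Real.log n)) ^ 2 ≤ (i : ℝ) →
        |(((List.ofFn fun j => z j ω).mergeSort (fun a b => decide (a ≤ b))).getD
            (m * i - 1) 0) - Real.sqrt ((i : ℝ) / n)|
          ≤ (1 / 100) * Real.sqrt ((i : ℝ) / n)}).toReal := by
  intro ε hε
  set r := exp (-(1 / 20000) : ℝ)
  have hbound : Tendsto (fun n : ℕ => 2 * r ^ ⌈160 * log n * log (log n) ^ 2⌉₊ / (1 - r))
      atTop (𝓝 0) := by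
    have hpow := tendsto_pow_atTop_nhds_zero_of_lt_one (exp_pos _).le
      (exp_lt_one_iff.2 (by norm_num : -(1 / 20000 : ℝ) < 0))
    have hthreshold := tendsto_nat_ceil_atTop.comp
      ((tendsto_const_mul_log_mul_log_log_sq_atTop (by norm_num : (0 : ℝ) < 160)).comp
        tendsto_natCast_atTop_atTop)
    simpa only [Function.comp_def, mul_zero, zero_div] using
      ((hpow.comp hthreshold).const_mul 2).div_const (1 - r)
  obtain ⟨N, hN⟩ := eventually_atTop.1 (hbound.eventually (ge_mem_nhds hε))
  refine ⟨N, fun n hn Ω _ μ _ z hz hind hcdf => ?_⟩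
  exact (sub_le_sub_left (hN n hn) 1).trans
    (one_sub_le_measureReal_forall_abs_orderStat_sub_sqrt_le (by omega) hz hind hcdf _)
end
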